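/- Let X_1, X_2, … be a sequence of random variables taking values in a (real) Banach space with norm ‖·‖, and suppose there are constants A > 0, a > 0, b ≥ 0 and γ ∈ (0,2) such that for all integers m ≥ 0, n ≥ 1 and all reals t ≥ 0, P{‖S(m+1, m+n)‖ > t} ≤ A·exp(−a t² / (n + b t^γ)). Then for every 0 < c < a there exists a constant C > 0 (depending only on A, a, b, γ and c) such that for all integers n ≥ 1, m ≥ 0 and all reals t ≥ 0, P{max_{m+1 ≤ j ≤ m+n} ‖S(m+1, j)‖ > t} ≤ C·exp(−c t² / (n + b t^γ)). -/

import Mathlib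

/-!
Write `D = n + b t^γ` and `e = exp (-c t² / D)`; the proof is by strong induction on `n`.
The union bound gives `n A exp (-a t² / D)`, which is at most `C e` when `n ≤ q`, and also when
`b t^γ` dominates `n`, because then the spare exponent `(a - c) t² / D` grows like `t^(2-γ)`
and absorbs the factor `n`. Otherwise cut `[1, n]` into at most `q ≈ 8 / ε²` blocks of length
`k ≤ ε² n / 4`. A partial sum above `t` either exceeds `(1 - ε) t` at the last block boundary
before it, which the hypothesis bounds by `A e` as soon as `c ≤ a (1 - ε)²`, or its part inside
that block exceeds `ε t`, which the induction hypothesis bounds by `C e²`, since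
`k + b (ε t)^γ ≤ ε² D / 2`. With `C e < 1` (else there is nothing to prove), `2 q A ≤ C` and
`2 q ≤ C`, both contributions `q A e` and `q C e²` are at most `C e / 2`.
-/

open MeasureTheory Finset Real

lemma exists_rpow_le_mul_exp {β κ : ℝ} (hβ : 0 ≤ β) (hκ : 0 < κ) :
    ∃ K, 0 ≤ K ∧ ∀ u, 0 ≤ u → u ^ β ≤ K * exp (κ * u) := by
  obtain ⟨N, hN⟩ := exists_nat_ge β
  refine ⟨1 + N.factorial / κ ^ N, by positivity, fun u hu => ?_⟩
  have h_one : 1 ≤ exp (κ * u) := one_le_exp (by positivity)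
  have h_pow : u ^ N ≤ N.factorial / κ ^ N * exp (κ * u) := by
    have := pow_div_factorial_le_exp (κ * u) (by positivity) N
    rw [mul_pow, div_le_iff₀ (by positivity)] at this
    rw [div_mul_eq_mul_div, le_div_iff₀ (by positivity)]
    linarith
  have h_rpow : u ^ β ≤ 1 + u ^ N := by
    rcases le_total u 1 with hu1 | hu1
    · linarith [rpow_le_one hu hu1 hβ, pow_nonneg hu N]
    · rw [← rpow_natCast]
      linarith [rpow_le_rpow_of_exponent_le hu1 hN]
  nlinarith

lemma exists_rpow_le_mul_exp_rpow_sub {γ κ : ℝ} (hγ₀ : 0 ≤ γ) (hγ₂ : γ < 2) (hκ : 0 < κ) :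
    ∃ K, 0 ≤ K ∧ ∀ t, 0 ≤ t → t ^ γ ≤ K * exp (κ * t ^ (2 - γ)) := by
  obtain ⟨K, hK, hle⟩ := exists_rpow_le_mul_exp (div_nonneg hγ₀ (sub_nonneg.2 hγ₂.le)) hκ
  refine ⟨K, hK, fun t ht => ?_⟩
  have : t ^ γ = (t ^ (2 - γ)) ^ (γ / (2 - γ)) := by
    rw [← rpow_mul ht, mul_div_cancel₀ _ (sub_ne_zero.2 hγ₂.ne')]
  exact this ▸ hle _ (rpow_nonneg ht _)

lemma exists_le_mul_one_sub_sq {a c : ℝ} (hc : 0 ≤ c) (hca : c < a) :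
    ∃ ε, 0 < ε ∧ ε ≤ 1 ∧ c ≤ a * (1 - ε) ^ 2 := by
  have ha : 0 < a := hc.trans_lt hca
  refine ⟨(a - c) / (2 * a), div_pos (by linarith) (by linarith),
    (div_le_one (by linarith)).2 (by linarith), ?_⟩
  have : 2 * a * ((a - c) / (2 * a)) = a - c := by field_simp
  nlinarith [mul_nonneg ha.le (sq_nonneg ((a - c) / (2 * a)))]

noncomputable def bernsteinExp (a b γ x t : ℝ) : ℝ := exp (-(a * t ^ 2) / (x + b * t ^ γ))

section BernsteinExp

variable {a a' b γ x y s t : ℝ}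

lemma bernsteinExp_pos : 0 < bernsteinExp a b γ x t := exp_pos _

lemma bernsteinExp_add :
    bernsteinExp (a + a') b γ x t = bernsteinExp a b γ x t * bernsteinExp a' b γ x t := by
  rw [bernsteinExp, bernsteinExp, bernsteinExp, ← exp_add]
  congr 1
  ring

lemma bernsteinExp_le_one (ha : 0 ≤ a) (hx : 0 ≤ x + b * t ^ γ) :
    bernsteinExp a b γ x t ≤ 1 :=
  exp_le_one_iff.2 (div_nonpos_of_nonpos_of_nonneg (by nlinarith [sq_nonneg t]) hx)

lemma bernsteinExp_le_bernsteinExp (hx : 0 < x + b * s ^ γ) (hy : 0 < y + b * t ^ γ)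
    (h : a' * t ^ 2 * (x + b * s ^ γ) ≤ a * s ^ 2 * (y + b * t ^ γ)) :
    bernsteinExp a b γ x s ≤ bernsteinExp a' b γ y t := by
  rw [bernsteinExp, bernsteinExp, exp_le_exp, neg_div, neg_div, neg_le_neg_iff,
    div_le_div_iff₀ hy hx]
  exact h

lemma mul_bernsteinExp_le_of_mul_bernsteinExp_sub_le {A C c : ℝ}
    (h : A * (x * bernsteinExp (a - c) b γ x t) ≤ C) :
    x * (A * bernsteinExp a b γ x t) ≤ C * bernsteinExp c b γ x t := by
  have hsplit : bernsteinExp a b γ x t = bernsteinExp (a - c) b γ x t * bernsteinExp c b γ x t := by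
    rw [← bernsteinExp_add, sub_add_cancel]
  calc x * (A * bernsteinExp a b γ x t)
      = A * (x * bernsteinExp (a - c) b γ x t) * bernsteinExp c b γ x t := by rw [hsplit]; ring
    _ ≤ C * bernsteinExp c b γ x t := mul_le_mul_of_nonneg_right h bernsteinExp_pos.le

lemma exists_mul_bernsteinExp_le {M κ : ℝ} (hb : 0 ≤ b) (hγ₀ : 0 ≤ γ) (hγ₂ : γ < 2) (hκ : 0 < κ)
    (hM : 0 ≤ M) : ∃ K, 0 ≤ K ∧ ∀ x t, 0 ≤ x → 0 ≤ t → x ≤ M * (b * t ^ γ) →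
      x * bernsteinExp κ b γ x t ≤ K := by
  rcases hb.eq_or_lt with rfl | hb
  · exact ⟨0, le_rfl, fun x t hx _ hxM => by simp [le_antisymm (by simpa using hxM) hx]⟩
  obtain ⟨K, hK, hle⟩ := exists_rpow_le_mul_exp_rpow_sub hγ₀ hγ₂ (κ := κ / ((M + 1) * b))
    (by positivity)
  refine ⟨M * b * K, by positivity, fun x t hx ht hxM => ?_⟩
  rcases hx.eq_or_lt with rfl | hx
  · rw [zero_mul]; positivity
  have hD : 0 < x + b * t ^ γ := by positivity
  have hexp : κ / ((M + 1) * b) * t ^ (2 - γ) ≤ κ * t ^ 2 / (x + b * t ^ γ) := by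
    rw [le_div_iff₀ hD, div_mul_eq_mul_div, div_mul_eq_mul_div, div_le_iff₀ (by positivity)]
    have h_pow : t ^ (2 - γ) * t ^ γ = t ^ 2 := by
      rw [← rpow_add' ht (by norm_num), sub_add_cancel, rpow_two]
    have hD_le : x + b * t ^ γ ≤ (M + 1) * b * t ^ γ := by linarith
    calc κ * t ^ (2 - γ) * (x + b * t ^ γ) ≤ κ * t ^ (2 - γ) * ((M + 1) * b * t ^ γ) := by
          gcongr
      _ = κ * t ^ 2 * ((M + 1) * b) := by rw [← h_pow]; ring
  have hx_le : x ≤ M * b * K * exp (κ * t ^ 2 / (x + b * t ^ γ)) :=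
    calc x ≤ M * (b * t ^ γ) := hxM
      _ ≤ M * (b * (K * exp (κ / ((M + 1) * b) * t ^ (2 - γ)))) := by gcongr; exact hle t ht
      _ ≤ M * (b * (K * exp (κ * t ^ 2 / (x + b * t ^ γ)))) := by gcongr
      _ = _ := by ring
  calc x * bernsteinExp κ b γ x t
      ≤ M * b * K * exp (κ * t ^ 2 / (x + b * t ^ γ)) * bernsteinExp κ b γ x t :=
        mul_le_mul_of_nonneg_right hx_le bernsteinExp_pos.le
    _ = M * b * K := by
        rw [bernsteinExp, mul_assoc, ← exp_add, neg_div, add_neg_cancel, exp_zero, mul_one]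

end BernsteinExp

lemma add_mul_rpow_pos {x b t γ : ℝ} (hx : 0 < x) (hb : 0 ≤ b) (ht : 0 ≤ t) :
    0 < x + b * t ^ γ := by
  positivity

lemma lt_norm_or_lt_norm_of_lt_norm_add {E : Type*} [SeminormedAddGroup E] {x y : E} {t : ℝ}
    (ε : ℝ) (h : t < ‖x + y‖) : (1 - ε) * t < ‖x‖ ∨ ε * t < ‖y‖ := by
  by_contra! h'
  linarith [norm_add_le x y]

lemma exists_eq_mul_add_of_le_mul {l q k : ℕ} (hl : 0 < l) (h : l ≤ q * k) :
    ∃ j < q, ∃ v ≤ k, l = j * k + v := by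
  have hk : 0 < k := Nat.pos_of_mul_pos_left (hl.trans_le h)
  refine ⟨(l - 1) / k, (Nat.div_lt_iff_lt_mul hk).2 (by omega), (l - 1) % k + 1,
    Nat.mod_lt _ hk, ?_⟩
  have := Nat.div_add_mod (l - 1) k
  rw [mul_comm] at this
  omega

lemma exists_le_mul_le_two_mul {q n : ℕ} (hq : 0 < q) (hqn : q ≤ n) :
    ∃ k, n ≤ q * k ∧ q * k ≤ 2 * n :=
  ⟨n / q + 1, (Nat.lt_mul_div_succ n hq).le, by rw [mul_add_one]; linarith [Nat.mul_div_le n q]⟩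

lemma exists_block_length {ε : ℝ} (hε₀ : 0 < ε) (hε₁ : ε ≤ 1) {q n : ℕ} (hq : 8 ≤ ε ^ 2 * q)
    (hqn : q ≤ n) : ∃ k, 0 < k ∧ k < n ∧ n ≤ q * k ∧ (k : ℝ) ≤ ε ^ 2 * n / 4 := by
  have hq₀ : 0 < q := Nat.pos_of_ne_zero (by rintro rfl; norm_num at hq)
  obtain ⟨k, hnk, hkn⟩ := exists_le_mul_le_two_mul hq₀ hqn
  have hk_le : (k : ℝ) ≤ ε ^ 2 * n / 4 := by
    have : (q : ℝ) * k ≤ 2 * n := by exact_mod_cast hkn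
    nlinarith
  have hk_lt : (k : ℝ) < n := by
    have hn : (1 : ℝ) ≤ n := by exact_mod_cast hq₀.trans_le hqn
    have : ε ^ 2 * n ≤ n := mul_le_of_le_one_left (by positivity) (pow_le_one₀ hε₀.le hε₁)
    linarith
  exact ⟨k, Nat.pos_of_ne_zero (by rintro rfl; omega), by exact_mod_cast hk_lt, hnk, hk_le⟩

lemma measure_biUnion_le_card_mul {Ω ι : Type*} [MeasurableSpace Ω] {μ : Measure Ω}
    (s : Finset ι) (E : ι → Set Ω) {r : ℝ} (h : ∀ i ∈ s, μ (E i) ≤ ENNReal.ofReal r) :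
    μ (⋃ i ∈ s, E i) ≤ ENNReal.ofReal (#s * r) := by
  rw [ENNReal.ofReal_mul (Nat.cast_nonneg _), ENNReal.ofReal_natCast, ← nsmul_eq_mul]
  exact (measure_biUnion_finset_le s E).trans (sum_le_card_nsmul s _ _ h)

section PartialSum

variable {Ω E : Type*} [SeminormedAddCommGroup E]

/-- `partialSum X m l ω` is `S(m+1, m+l)`. -/
def partialSum (X : ℕ → Ω → E) (m l : ℕ) (ω : Ω) : E := ∑ i ∈ Ioc m (m + l), X i ω

variable {X : ℕ → Ω → E}

@[simp]
lemma partialSum_zero (m : ℕ) (ω : Ω) : partialSum X m 0 ω = 0 := by simp [partialSum]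

lemma partialSum_add (m u v : ℕ) (ω : Ω) :
    partialSum X m (u + v) ω = partialSum X m u ω + partialSum X (m + u) v ω := by
  rw [partialSum, partialSum, partialSum, ← add_assoc, sum_Ioc_consecutive _ (by omega) (by omega)]

lemma pos_of_lt_norm_partialSum {m l : ℕ} {ω : Ω} {t : ℝ} (ht : 0 ≤ t)
    (h : t < ‖partialSum X m l ω‖) : 0 < l :=
  Nat.pos_of_ne_zero fun hl => by simp only [hl, partialSum_zero, norm_zero] at h; linarith

lemma setOf_exists_lt_norm_partialSum_subset {m n q k : ℕ} (hn : n ≤ q * k) {t : ℝ} (ht : 0 ≤ t)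
    (ε : ℝ) : {ω | ∃ l ≤ n, t < ‖partialSum X m l ω‖} ⊆
      (⋃ j ∈ (range q).filter (· * k ≤ n), {ω | (1 - ε) * t < ‖partialSum X m (j * k) ω‖}) ∪
        ⋃ j ∈ range q, {ω | ∃ v ≤ k, ε * t < ‖partialSum X (m + j * k) v ω‖} := by
  rintro ω ⟨l, hln, hlt⟩
  obtain ⟨j, hjq, v, hvk, rfl⟩ :=
    exists_eq_mul_add_of_le_mul (pos_of_lt_norm_partialSum ht hlt) (hln.trans hn)
  rw [partialSum_add] at hlt
  rcases lt_norm_or_lt_norm_of_lt_norm_add ε hlt with h | h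
  · exact Or.inl (Set.mem_biUnion (mem_filter.2 ⟨mem_range.2 hjq, by omega⟩) h)
  · exact Or.inr (Set.mem_biUnion (mem_range.2 hjq) ⟨v, hvk, h⟩)

variable [MeasurableSpace Ω] {P : Measure Ω} {A a b γ : ℝ}

def HasBernsteinTail (P : Measure Ω) (X : ℕ → Ω → E) (A a b γ : ℝ) : Prop :=
  ∀ m n : ℕ, 1 ≤ n → ∀ t : ℝ, 0 ≤ t →
    P {ω | t < ‖partialSum X m n ω‖} ≤ ENNReal.ofReal (A * bernsteinExp a b γ n t)

namespace HasBernsteinTail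

lemma measure_lt_norm_le (hX : HasBernsteinTail P X A a b γ) (hA : 0 ≤ A) (ha : 0 ≤ a)
    (hb : 0 ≤ b) {m l n : ℕ} (hln : l ≤ n) {t : ℝ} (ht : 0 ≤ t) :
    P {ω | t < ‖partialSum X m l ω‖} ≤ ENNReal.ofReal (A * bernsteinExp a b γ n t) := by
  rcases l.eq_zero_or_pos with rfl | hl
  · simp [ht.not_gt]
  refine (hX m l hl t ht).trans (ENNReal.ofReal_le_ofReal (mul_le_mul_of_nonneg_left ?_ hA))
  have hl' : (1 : ℝ) ≤ l := by exact_mod_cast hl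
  have hln' : (l : ℝ) ≤ n := by exact_mod_cast hln
  exact bernsteinExp_le_bernsteinExp (add_mul_rpow_pos (by linarith) hb ht)
    (add_mul_rpow_pos (by linarith) hb ht) (by gcongr)

lemma measure_exists_lt_norm_le (hX : HasBernsteinTail P X A a b γ) (hA : 0 ≤ A) (ha : 0 ≤ a)
    (hb : 0 ≤ b) (m n : ℕ) {t : ℝ} (ht : 0 ≤ t) :
    P {ω | ∃ l ≤ n, t < ‖partialSum X m l ω‖} ≤
      ENNReal.ofReal (n * (A * bernsteinExp a b γ n t)) := by
  have hsub : {ω | ∃ l ≤ n, t < ‖partialSum X m l ω‖} ⊆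
      ⋃ l ∈ Icc 1 n, {ω | t < ‖partialSum X m l ω‖} := by
    rintro ω ⟨l, hln, hlt⟩
    exact Set.mem_biUnion (mem_Icc.2 ⟨pos_of_lt_norm_partialSum ht hlt, hln⟩) hlt
  refine (measure_mono hsub).trans ((measure_biUnion_le_card_mul (Icc 1 n) _ fun l hl =>
    hX.measure_lt_norm_le hA ha hb (mem_Icc.1 hl).2 ht).trans_eq ?_)
  rw [Nat.card_Icc, add_tsub_cancel_right]

lemma measure_one_sub_mul_lt_norm_le (hX : HasBernsteinTail P X A a b γ) (hA : 0 ≤ A)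
    (ha : 0 ≤ a) (hb : 0 ≤ b) (hγ : 0 ≤ γ) {c ε : ℝ} (hε₀ : 0 ≤ ε) (hε₁ : ε ≤ 1)
    (hcε : c ≤ a * (1 - ε) ^ 2) {m l n : ℕ} (hln : l ≤ n) (hn : 1 ≤ n) {t : ℝ} (ht : 0 ≤ t) :
    P {ω | (1 - ε) * t < ‖partialSum X m l ω‖} ≤ ENNReal.ofReal (A * bernsteinExp c b γ n t) := by
  have hεt : 0 ≤ (1 - ε) * t := mul_nonneg (by linarith) ht
  have hn' : (1 : ℝ) ≤ n := by exact_mod_cast hn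
  refine (hX.measure_lt_norm_le hA ha hb hln hεt).trans (ENNReal.ofReal_le_ofReal
    (mul_le_mul_of_nonneg_left (bernsteinExp_le_bernsteinExp (add_mul_rpow_pos (by linarith) hb hεt)
      (add_mul_rpow_pos (by linarith) hb ht) ?_) hA))
  have h_pow : ((1 - ε) * t) ^ γ ≤ t ^ γ := rpow_le_rpow hεt (by nlinarith) hγ
  have h_coef : c * t ^ 2 ≤ a * ((1 - ε) * t) ^ 2 := by
    rw [mul_pow, ← mul_assoc]; gcongr
  gcongr

lemma measure_exists_lt_norm_le_of_forall_lt (hX : HasBernsteinTail P X A a b γ) (hA : 0 ≤ A)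
    (ha : 0 ≤ a) (hb : 0 ≤ b) (hγ : 0 ≤ γ) {c ε C : ℝ} (hc : 0 ≤ c) (hε₀ : 0 < ε) (hε₁ : ε ≤ 1)
    (hcε : c ≤ a * (1 - ε) ^ 2) {q n : ℕ} (hq : 8 ≤ ε ^ 2 * q) (hqA : 2 * q * A ≤ C)
    (hqC : 2 * q ≤ C) (hqn : q ≤ n)
    (ih : ∀ k < n, ∀ m t, 0 ≤ t → P {ω | ∃ l ≤ k, t < ‖partialSum X m l ω‖} ≤
      ENNReal.ofReal (C * bernsteinExp c b γ k t))
    {m : ℕ} {t : ℝ} (ht : 0 ≤ t) (hsmall : b * (ε * t) ^ γ ≤ ε ^ 2 * n / 4)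
    (hlt : C * bernsteinExp c b γ n t < 1) :
    P {ω | ∃ l ≤ n, t < ‖partialSum X m l ω‖} ≤ ENNReal.ofReal (C * bernsteinExp c b γ n t) := by
  obtain ⟨k, hk₀, hkn, hnk, hk_le⟩ := exists_block_length hε₀ hε₁ hq hqn
  have hk₁ : (1 : ℝ) ≤ k := by exact_mod_cast hk₀
  have hn₁ : (1 : ℝ) ≤ n := by exact_mod_cast hk₀.trans hkn
  have hD : 0 < (n : ℝ) + b * t ^ γ := add_mul_rpow_pos (by linarith) hb ht
  have hC : 0 ≤ C := by linarith [(Nat.cast_nonneg q : (0 : ℝ) ≤ q)]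
  set e := bernsteinExp c b γ n t
  have he : 0 < e := bernsteinExp_pos
  have hG : ∀ j ∈ range q, P {ω | ∃ v ≤ k, ε * t < ‖partialSum X (m + j * k) v ω‖} ≤
      ENNReal.ofReal (C * e * e) := by
    intro j _
    have hεt : 0 ≤ ε * t := by positivity
    refine (ih k hkn _ _ hεt).trans (ENNReal.ofReal_le_ofReal ?_)
    rw [mul_assoc, ← bernsteinExp_add]
    refine mul_le_mul_of_nonneg_left (bernsteinExp_le_bernsteinExp
      (add_mul_rpow_pos (by linarith) hb hεt) hD ?_) hC
    have h_denom : (k : ℝ) + b * (ε * t) ^ γ ≤ ε ^ 2 * (n + b * t ^ γ) / 2 := by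
      nlinarith [mul_nonneg (sq_nonneg ε) (mul_nonneg hb (rpow_nonneg ht γ))]
    calc (c + c) * t ^ 2 * (k + b * (ε * t) ^ γ)
        ≤ (c + c) * t ^ 2 * (ε ^ 2 * (n + b * t ^ γ) / 2) := by gcongr
      _ = c * (ε * t) ^ 2 * (n + b * t ^ γ) := by ring
  have hcard : (#((range q).filter (· * k ≤ n)) : ℝ) ≤ q := by
    exact_mod_cast (card_filter_le _ _).trans (card_range q).le
  calc P _ ≤ P ((⋃ j ∈ (range q).filter (· * k ≤ n),
          {ω | (1 - ε) * t < ‖partialSum X m (j * k) ω‖}) ∪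
        ⋃ j ∈ range q, {ω | ∃ v ≤ k, ε * t < ‖partialSum X (m + j * k) v ω‖}) :=
        measure_mono (setOf_exists_lt_norm_partialSum_subset hnk ht ε)
    _ ≤ ENNReal.ofReal (#((range q).filter (· * k ≤ n)) * (A * e)) +
        ENNReal.ofReal (#(range q) * (C * e * e)) :=
        (measure_union_le _ _).trans (add_le_add (measure_biUnion_le_card_mul _ _ fun j hj =>
          hX.measure_one_sub_mul_lt_norm_le hA ha hb hγ hε₀.le hε₁ hcε (mem_filter.1 hj).2
            (hk₀.trans hkn) ht)
          (measure_biUnion_le_card_mul _ _ hG))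
    _ ≤ ENNReal.ofReal (C * e) := by
      rw [← ENNReal.ofReal_add (by positivity) (by positivity), card_range]
      refine ENNReal.ofReal_le_ofReal ?_
      have hF_sum := mul_le_mul_of_nonneg_right hcard (by positivity : 0 ≤ A * e)
      have hG_sum := mul_le_mul_of_nonneg_left (mul_le_of_le_one_left he.le hlt.le)
        (Nat.cast_nonneg q : (0 : ℝ) ≤ q)
      nlinarith

theorem exists_measure_exists_lt_norm_le [IsProbabilityMeasure P]
    (hX : HasBernsteinTail P X A a b γ) (hA : 0 ≤ A) (hb : 0 ≤ b) (hγ₀ : 0 ≤ γ) (hγ₂ : γ < 2)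
    {c : ℝ} (hc : 0 ≤ c) (hca : c < a) :
    ∃ C, 0 < C ∧ ∀ n m t, 0 ≤ t → P {ω | ∃ l ≤ n, t < ‖partialSum X m l ω‖} ≤
      ENNReal.ofReal (C * bernsteinExp c b γ n t) := by
  obtain ⟨ε, hε₀, hε₁, hcε⟩ := exists_le_mul_one_sub_sq hc hca
  obtain ⟨q, hq⟩ := exists_nat_ge (8 / ε ^ 2)
  rw [div_le_iff₀ (by positivity), mul_comm] at hq
  have hq₀ : (0 : ℝ) < q := by nlinarith
  obtain ⟨K, hK, hKle⟩ := exists_mul_bernsteinExp_le (M := 4 * ε ^ γ / ε ^ 2) hb hγ₀ hγ₂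
    (sub_pos.2 hca) (by positivity)
  set C := max (max (A * K) (2 * q * A)) (2 * q)
  refine ⟨C, lt_max_of_lt_right (by positivity), fun n => ?_⟩
  induction n using Nat.strong_induction_on with
  | _ n ih =>
  intro m t ht
  by_cases hunion : n * (A * bernsteinExp a b γ n t) ≤ C * bernsteinExp c b γ n t
  · exact (hX.measure_exists_lt_norm_le hA (hc.trans hca.le) hb m n ht).trans
      (ENNReal.ofReal_le_ofReal hunion)
  by_cases htriv : 1 ≤ C * bernsteinExp c b γ n t
  · exact prob_le_one.trans (ENNReal.one_le_ofReal.2 htriv)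
  have hqn : q ≤ n := by
    by_contra! hnq
    refine hunion (mul_bernsteinExp_le_of_mul_bernsteinExp_sub_le ?_)
    calc A * (n * bernsteinExp (a - c) b γ n t) ≤ A * ((q : ℝ) * 1) :=
          mul_le_mul_of_nonneg_left (mul_le_mul (by exact_mod_cast hnq.le)
            (bernsteinExp_le_one (sub_nonneg.2 hca.le) (by positivity)) bernsteinExp_pos.le
            hq₀.le) hA
      _ ≤ C := le_max_of_le_left (le_max_of_le_right (by nlinarith))
  have hsmall : b * (ε * t) ^ γ ≤ ε ^ 2 * n / 4 := by
    by_contra! hbig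
    refine hunion (mul_bernsteinExp_le_of_mul_bernsteinExp_sub_le ?_)
    have hnM : (n : ℝ) ≤ 4 * ε ^ γ / ε ^ 2 * (b * t ^ γ) := by
      rw [mul_rpow hε₀.le ht] at hbig
      rw [div_mul_eq_mul_div, le_div_iff₀ (by positivity)]
      linarith
    calc A * (n * bernsteinExp (a - c) b γ n t) ≤ A * K := by
          gcongr
          exact hKle n t (by positivity) ht hnM
      _ ≤ C := le_max_of_le_left (le_max_left _ _)
  exact hX.measure_exists_lt_norm_le_of_forall_lt hA (hc.trans hca.le) hb hγ₀ hc hε₀ hε₁ hcε hq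
    (le_max_of_le_left (le_max_right _ _)) (le_max_right _ _) hqn ih ht hsmall (not_le.1 htriv)

end HasBernsteinTail

end PartialSum

/-- **Maximal Bernstein inequality for Banach space valued random variables**
(Kevei–Mason, Remark 6). If the partial sums `S(m+1, m+n) = ∑_{i=m+1}^{m+n} X i`
of a sequence of random variables with values in a real Banach space `B` satisfy
`P{‖S(m+1, m+n)‖ > t} ≤ A · exp(−a t² / (n + b t^γ))`,
then for every `0 < c < a` there is a constant `C > 0` such that
`P{max_{m+1 ≤ j ≤ m+n} ‖S(m+1, j)‖ > t} ≤ C · exp(−c t² / (n + b t^γ))`. -/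
theorem maximal_bernstein_banach
    {Ω : Type*} [MeasurableSpace Ω] (P : Measure Ω) [IsProbabilityMeasure P]
    (B : Type*) [NormedAddCommGroup B]
    (X : ℕ → Ω → B) (A a b γ : ℝ)
    (hA : 0 < A) (hb : 0 ≤ b) (hγ : γ ∈ Set.Ioo (0 : ℝ) 2)
    (hBern : ∀ (m n : ℕ), 1 ≤ n → ∀ t : ℝ, 0 ≤ t →
      P {ω | t < ‖∑ i ∈ Finset.Icc (m + 1) (m + n), X i ω‖}
        ≤ ENNReal.ofReal (A * Real.exp (-(a * t ^ 2) / (n + b * t ^ γ)))) :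
    ∀ c : ℝ, 0 < c → c < a → ∃ C : ℝ, 0 < C ∧
      ∀ (m n : ℕ) (hn : 1 ≤ n), ∀ t : ℝ, 0 ≤ t →
        P {ω | t < (Finset.Icc (m + 1) (m + n)).sup'
              (Finset.nonempty_Icc.mpr (by omega))
              (fun j => ‖∑ i ∈ Finset.Icc (m + 1) j, X i ω‖)}
          ≤ ENNReal.ofReal (C * Real.exp (-(c * t ^ 2) / (n + b * t ^ γ))) := by
  intro c hc hca
  have hX : HasBernsteinTail P X A a b γ := fun m n hn t ht => by
    simpa only [partialSum, bernsteinExp, ← Icc_add_one_left_eq_Ioc] using hBern m n hn t ht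
  obtain ⟨C, hC, hmax⟩ := hX.exists_measure_exists_lt_norm_le hA.le hb hγ.1.le hγ.2 hc.le hca
  refine ⟨C, hC, fun m n _ t ht => (measure_mono ?_).trans (hmax n m t ht)⟩
  intro ω hω
  obtain ⟨j, hj, hjt⟩ := (lt_sup'_iff _).1 (show t < _ from hω)
  obtain ⟨hmj, hjn⟩ := mem_Icc.1 hj
  refine ⟨j - m, by omega, ?_⟩
  rwa [partialSum, Nat.add_sub_cancel' (by omega), ← Icc_add_one_left_eq_Ioc]
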